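/- arXiv:1512.02692 — 6 statements merged into one kernel-verified Lean document; each statement's English description precedes it below -/
import Mathlib

section
/- Let N ≥ 1 and ν ≥ N. For the maximally entangled resource state with entries ρ_{k,j} = 1/(ν+1) for all 0 ≤ k,j ≤ ν, the teleportation fidelity f = 2/(N+2) + Σ_{k≠j} max{0, N+1-|k-j|}/((N+1)(N+2)(ν+1)) equals 1 - N/(3(ν+1)). -/
/-!
With `a = N + 1` and `n = ν + 1`, the off-diagonal sum is `T(a, n) - n a` over the common
denominator, where `T(a, n) = ∑_{k,j<n} max 0 (a - |k - j|)` is the band sum of the Toeplitz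
matrix. Bordering the `n × n` square by one row and one column adds `2 ∑_{d ≤ n} (a - d)⁺ - a`,
which is `a²` as soon as `a ≤ n + 1`; raising `a` by one adds `n²` while `n ≤ a + 1`. These two
recurrences give `3 T(a, a) = 2a³ + a` and then `3 T(a, n) + a³ = 3 n a² + a` for `a ≤ n`,
which is the claimed fidelity after clearing denominators.
-/

open Finset

-- Truncated subtraction: the entries are `max 0 (a - |k - j|)`.
def bandSum (a n : ℕ) : ℕ := ∑ k ∈ range n, ∑ j ∈ range n, (a - Nat.dist k j)

theorem two_mul_sum_range_tsub {a n : ℕ} (h : a ≤ n) :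
    2 * ∑ d ∈ range n, (a - d) = a * (a + 1) := by
  have htrunc : ∑ d ∈ range n, (a - d) = ∑ d ∈ range a, (a - d) := by
    refine (sum_subset (range_subset_range.2 h) fun d hd hda => ?_).symm
    simp only [mem_range] at hd hda
    omega
  have hreflect : ∑ d ∈ range a, (a - d) = ∑ d ∈ range (a + 1), d := by
    rw [← sum_range_reflect, sum_range_succ']
    exact sum_congr rfl fun d hd => by simp only [mem_range] at hd; omega
  rw [htrunc, hreflect, mul_comm, sum_range_id_mul_two, Nat.add_sub_cancel, mul_comm]

theorem sum_range_tsub_dist_right (a n : ℕ) :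
    ∑ k ∈ range n, (a - Nat.dist k n) = ∑ d ∈ range n, (a - (d + 1)) := by
  rw [← sum_range_reflect]
  exact sum_congr rfl fun d hd => by
    simp only [mem_range] at hd
    rw [Nat.dist_eq_sub_of_le (by omega)]
    congr 1
    omega

theorem bandSum_succ_add (a n : ℕ) :
    bandSum a (n + 1) + a = bandSum a n + 2 * ∑ d ∈ range (n + 1), (a - d) := by
  have hcol : ∑ j ∈ range n, (a - Nat.dist n j) = ∑ k ∈ range n, (a - Nat.dist k n) :=
    sum_congr rfl fun j _ => by rw [Nat.dist_comm]
  simp only [bandSum, sum_range_succ, sum_add_distrib, hcol, sum_range_tsub_dist_right,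
    Nat.dist_self, Nat.sub_zero, sum_range_succ' (fun d => a - d)]
  ring

theorem bandSum_succ_of_le {a n : ℕ} (h : a ≤ n + 1) :
    bandSum a (n + 1) = bandSum a n + a ^ 2 := by
  have := bandSum_succ_add a n
  rw [two_mul_sum_range_tsub h] at this
  linarith

theorem bandSum_succ_left {a n : ℕ} (h : n ≤ a + 1) :
    bandSum (a + 1) n = bandSum a n + n ^ 2 := by
  have hterm : ∀ k ∈ range n, ∀ j ∈ range n,
      a + 1 - Nat.dist k j = (a - Nat.dist k j) + 1 := by
    intro k hk j hj
    simp only [mem_range] at hk hj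
    unfold Nat.dist
    omega
  simp only [bandSum]
  rw [sum_congr rfl fun k hk => sum_congr rfl (hterm k hk)]
  simp only [sum_add_distrib, sum_const, card_range, smul_eq_mul]
  ring

theorem three_mul_bandSum_self (a : ℕ) : 3 * bandSum a a = 2 * a ^ 3 + a := by
  induction a with
  | zero => simp [bandSum]
  | succ a ih =>
    rw [bandSum_succ_of_le le_rfl, bandSum_succ_left (Nat.le_succ a)]
    linarith

theorem three_mul_bandSum {a n : ℕ} (h : a ≤ n) :
    3 * bandSum a n + a ^ 3 = 3 * n * a ^ 2 + a := by
  induction n, h using Nat.le_induction with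
  | base => linarith [three_mul_bandSum_self a]
  | succ n hn ih =>
    rw [bandSum_succ_of_le (by omega)]
    linarith

section OrderedRing

variable {R : Type*} [Ring R] [LinearOrder R] [IsStrictOrderedRing R]

theorem Nat.cast_tsub_eq_max (a b : ℕ) : ((a - b : ℕ) : R) = max 0 ((a : R) - b) := by
  rcases le_total a b with h | h
  · simp [Nat.sub_eq_zero_of_le h, h]
  · simp [Nat.cast_sub h, h]

theorem cast_tsub_dist (a k j : ℕ) :
    ((a - Nat.dist k j : ℕ) : R) = max 0 ((a : R) - |(k : R) - j|) := by
  rcases le_total k j with h | h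
  · rw [Nat.dist_eq_sub_of_le h, abs_sub_comm, abs_of_nonneg (by simpa using h),
      Nat.cast_tsub_eq_max, Nat.cast_sub h]
  · rw [Nat.dist_eq_sub_of_le_right h, abs_of_nonneg (by simpa using h),
      Nat.cast_tsub_eq_max, Nat.cast_sub h]

theorem offDiag_sum_eq_bandSum_sub (a n : ℕ) :
    ∑ k : Fin n, ∑ j : Fin n, (if k = j then 0 else max 0 ((a : R) - |(k : R) - j|)) =
      bandSum a n - n * a := by
  have hterm : ∀ k j : Fin n, (if k = j then 0 else max 0 ((a : R) - |(k : R) - j|)) =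
      ((a - Nat.dist k j : ℕ) : R) - if k = j then (a : R) else 0 := by
    intro k j
    split_ifs with hkj
    · simp [hkj]
    · rw [cast_tsub_dist, sub_zero]
  simp only [hterm, sum_sub_distrib, sum_ite_eq, mem_univ, if_true, sum_const, card_univ,
    Fintype.card_fin, nsmul_eq_mul, bandSum, Nat.cast_sum, Finset.sum_range]

end OrderedRing

theorem max_ent_fidelity_general (N ν : ℕ) (hν : N ≤ ν) :
    2 / ((N : ℝ) + 2) +
      ∑ k : Fin (ν + 1), ∑ j : Fin (ν + 1), (if k = j then 0 else
        max 0 ((N : ℝ) + 1 - |(k.1 : ℝ) - (j.1 : ℝ)|) /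
          (((N : ℝ) + 1) * ((N : ℝ) + 2) * ((ν : ℝ) + 1)))
      = 1 - (N : ℝ) / (3 * ((ν : ℝ) + 1)) := by
  have hsum := congrArg (· / (((N : ℝ) + 1) * ((N : ℝ) + 2) * ((ν : ℝ) + 1)))
    (offDiag_sum_eq_bandSum_sub (R := ℝ) (N + 1) (ν + 1))
  simp only [sum_div, ite_div, zero_div] at hsum
  push_cast at hsum
  rw [hsum]
  have hband : (3 * bandSum (N + 1) (ν + 1) + (N + 1) ^ 3 : ℝ) =
      3 * (ν + 1) * (N + 1) ^ 2 + (N + 1) := by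
    exact_mod_cast three_mul_bandSum (a := N + 1) (n := ν + 1) (by omega)
  field_simp
  linear_combination hband

theorem max_ent_fidelity (N ν : ℕ) (hN : 1 ≤ N) (hν : N ≤ ν) :
    2 / ((N : ℝ) + 2) +
      ∑ k : Fin (ν + 1), ∑ j : Fin (ν + 1), (if k = j then 0 else
        max 0 ((N : ℝ) + 1 - |(k.1 : ℝ) - (j.1 : ℝ)|) /
          (((N : ℝ) + 1) * ((N : ℝ) + 2) * ((ν : ℝ) + 1)))
      = 1 - (N : ℝ) / (3 * ((ν : ℝ) + 1)) :=
  max_ent_fidelity_general N ν hν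
end

section
/- Let N ≥ 1 and ν ≥ N. For the maximally entangled resource state ρ_{k,j} = 1/(ν+1), the average final entanglement E = (π/8) Σ_{k≠j} max{0, N+1-|k-j|}/((N+1)(ν+1)) equals πN(3ν-N+1)/(24(ν+1)). -/
open Finset Real

/-!
The tent weight `max 0 (N + 1 - |k - j|)` is symmetric and depends only on the distance
`d = |k - j|`, and among the indices `0, …, ν` exactly `ν + 1 - d` ordered pairs `k > j` are at
distance `d`. So the off-diagonal sum is `2 ∑_{d=1}^{N} (ν + 1 - d) (N + 1 - d)` (the tent
vanishes beyond `N ≤ ν`), a polynomial sum equal to `N (N + 1) (3ν - N + 1) / 3`.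
-/

theorem sum_range_sum_range_eq_diag_add_two_nsmul {M : Type*} [AddCommMonoid M]
    (w : ℕ → ℕ → M) (hw : ∀ k j, w k j = w j k) (n : ℕ) :
    ∑ k ∈ range n, ∑ j ∈ range n, w k j
      = ∑ k ∈ range n, w k k + 2 • ∑ k ∈ range n, ∑ j ∈ range k, w k j := by
  induction n with
  | zero => simp
  | succ n ih =>
    have hcol : ∑ k ∈ range n, w k n = ∑ j ∈ range n, w n j :=
      sum_congr rfl fun k _ => hw k n
    simp only [sum_range_succ, sum_add_distrib, ih, hcol, two_nsmul]
    abel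

theorem sum_range_sum_range_sub_eq {M : Type*} [AddCommMonoid M] (f : ℕ → M) (n : ℕ) :
    ∑ k ∈ range n, ∑ j ∈ range k, f (k - j) = ∑ d ∈ range n, (n - 1 - d) • f (d + 1) := by
  induction n with
  | zero => simp
  | succ n ih =>
    have hrow : ∑ j ∈ range n, f (n - j) = ∑ d ∈ range n, f (d + 1) := by
      rw [← sum_range_reflect]
      exact sum_congr rfl fun d hd => congrArg f (by grind)
    rw [sum_range_succ, ih, hrow, ← sum_add_distrib, sum_range_succ]
    simp only [add_tsub_cancel_right, tsub_self, zero_smul, add_zero]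
    exact sum_congr rfl fun d hd => by
      rw [← succ_nsmul]; congr 1; grind

theorem sum_range_sub_mul_sub (N : ℕ) (a : ℝ) :
    ∑ d ∈ range (N + 1), (a - d) * (N - d) = N * (N + 1) * (3 * a - N + 1) / 6 := by
  induction N generalizing a with
  | zero => simp
  | succ N ih =>
    rw [sum_range_succ']
    push_cast
    rw [sum_congr rfl fun (d : ℕ) _ => (by ring : (a - ((d : ℝ) + 1)) * ((N : ℝ) + 1 - (d + 1))
      = (a - 1 - d) * (N - d)), ih]
    ring

theorem sum_range_tsub_mul_max_zero_sub {N ν : ℕ} (hν : N ≤ ν) :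
    ∑ d ∈ range (ν + 1), ((ν - d : ℕ) : ℝ) * max 0 ((N : ℝ) - d)
      = ∑ d ∈ range (N + 1), ((ν : ℝ) - d) * (N - d) := by
  obtain ⟨m, rfl⟩ := Nat.exists_eq_add_of_le hν
  rw [show N + m + 1 = N + 1 + m by ring, sum_range_add]
  have htail : ∀ d ∈ range m, max 0 ((N : ℝ) - ((N + 1 + d : ℕ) : ℝ)) = 0 := fun d _ =>
    max_eq_left (by push_cast; linarith [(d.cast_nonneg : (0:ℝ) ≤ d)])
  rw [sum_eq_zero (s := range m) fun d hd => by rw [htail d hd, mul_zero], add_zero]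
  refine sum_congr rfl fun d hd => ?_
  have hd : d ≤ N := Nat.lt_succ_iff.mp (mem_range.mp hd)
  rw [Nat.cast_sub (by omega), max_eq_right (by simpa using hd)]

theorem sum_offDiag_max_zero_sub_abs {N ν : ℕ} (hν : N ≤ ν) :
    ∑ k ∈ range (ν + 1), ∑ j ∈ range (ν + 1),
        (if k = j then 0 else max 0 ((N : ℝ) + 1 - |(k : ℝ) - j|))
      = N * (N + 1) * (3 * ν - N + 1) / 3 := by
  have hlower : ∀ k, ∑ j ∈ range k, (if k = j then 0 else max 0 ((N : ℝ) + 1 - |(k : ℝ) - j|))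
      = ∑ j ∈ range k, max 0 ((N : ℝ) + 1 - ((k - j : ℕ) : ℝ)) := fun k =>
    sum_congr rfl fun j hj => by
      have hjk : j < k := mem_range.mp hj
      rw [if_neg hjk.ne', Nat.cast_sub hjk.le, abs_of_nonneg (by simpa using hjk.le)]
  rw [sum_range_sum_range_eq_diag_add_two_nsmul _ (fun k j => by
      simp only [eq_comm (a := k), abs_sub_comm]), sum_congr rfl fun k _ => hlower k,
    sum_range_sum_range_sub_eq (fun d => max 0 ((N : ℝ) + 1 - d))]
  simp only [if_true, sum_const_zero, zero_add, add_tsub_cancel_right, nsmul_eq_mul]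
  push_cast
  simp only [add_sub_add_right_eq_sub]
  rw [sum_range_tsub_mul_max_zero_sub hν, sum_range_sub_mul_sub]
  ring

theorem max_ent_entanglement_general (N ν : ℕ) (hν : N ≤ ν) :
    (π / 8) * ∑ k : Fin (ν + 1), ∑ j : Fin (ν + 1), (if k = j then 0 else
        max 0 ((N : ℝ) + 1 - |(k.1 : ℝ) - (j.1 : ℝ)|) /
          (((N : ℝ) + 1) * ((ν : ℝ) + 1)))
      = π * (N : ℝ) * (3 * (ν : ℝ) - (N : ℝ) + 1) / (24 * ((ν : ℝ) + 1)) := by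
  set c : ℝ := ((N : ℝ) + 1) * ((ν : ℝ) + 1)
  have hterm : ∀ k j : Fin (ν + 1),
      (if k = j then 0 else max 0 ((N : ℝ) + 1 - |(k.1 : ℝ) - j.1|) / c)
        = (if k.1 = j.1 then 0 else max 0 ((N : ℝ) + 1 - |(k.1 : ℝ) - j.1|)) / c := by
    intro k j
    simp only [Fin.val_inj, ite_div, zero_div]
  have hsum : ∑ k : Fin (ν + 1), ∑ j : Fin (ν + 1),
      (if k.1 = j.1 then 0 else max 0 ((N : ℝ) + 1 - |(k.1 : ℝ) - j.1|))
        = N * (N + 1) * (3 * ν - N + 1) / 3 := by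
    rw [← sum_offDiag_max_zero_sub_abs hν]
    simp only [Finset.sum_range]
  simp only [hterm, ← sum_div, hsum, c]
  field_simp
  ring

theorem max_ent_entanglement (N ν : ℕ) (hN : 1 ≤ N) (hν : N ≤ ν) :
    (π / 8) * ∑ k : Fin (ν + 1), ∑ j : Fin (ν + 1), (if k = j then 0 else
        max 0 ((N : ℝ) + 1 - |(k.1 : ℝ) - (j.1 : ℝ)|) /
          (((N : ℝ) + 1) * ((ν : ℝ) + 1)))
      = π * (N : ℝ) * (3 * (ν : ℝ) - (N : ℝ) + 1) / (24 * ((ν : ℝ) + 1)) :=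
  max_ent_entanglement_general N ν hν
end

section
/- If a Hermitian positive semidefinite trace-1 resource state ρ(0) with entries indexed 0..ν has all entries ρ_{k,j}(0) ≥ 0 for |k-j| < N+1, and fidelity f(0) > 2/(N+2), then for every t ≥ 0 the dephased state ρ_{k,j}(t) = e^{-(t/2)λ(k-j)²}ρ_{k,j}(0) (λ > 0) still has fidelity f(t) > 2/(N+2). -/
/-! Dephasing multiplies each entry `ρ k j` by the positive factor `exp (-(t/2) λ (k - j)²)`.
The fidelity advantage is a sum of non-negative terms (the weight vanishes outside the band
`|k - j| < N + 1` where `ρ k j ≥ 0`), and a sum of non-negative terms stays positive under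
rescaling of its terms by positive factors. -/

open Finset Real

theorem Finset.sum_mul_pos_of_sum_pos {ι : Type*} {s : Finset ι} {c f : ι → ℝ}
    (hc : ∀ i ∈ s, 0 < c i) (hf : ∀ i ∈ s, 0 ≤ f i) (h : 0 < ∑ i ∈ s, f i) :
    0 < ∑ i ∈ s, c i * f i := by
  obtain ⟨i, hi, hfi⟩ := (sum_pos_iff_of_nonneg hf).mp h
  exact (sum_pos_iff_of_nonneg fun j hj => mul_nonneg (hc j hj).le (hf j hj)).mpr
    ⟨i, hi, mul_pos (hc i hi) hfi⟩

theorem Fintype.sum_sum_mul_pos_of_sum_sum_pos {ι κ : Type*} [Fintype ι] [Fintype κ]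
    {c f : ι → κ → ℝ} (hc : ∀ i j, 0 < c i j) (hf : ∀ i j, 0 ≤ f i j)
    (h : 0 < ∑ i, ∑ j, f i j) : 0 < ∑ i, ∑ j, c i j * f i j := by
  rw [← Fintype.sum_prod_type'] at h ⊢
  exact Finset.sum_mul_pos_of_sum_pos (fun p _ => hc p.1 p.2) (fun p _ => hf p.1 p.2) h

theorem bandWeight_mul_nonneg (N a b x : ℝ) (hN : 0 < N + 1)
    (hx : |a - b| < N + 1 → 0 ≤ x) :
    0 ≤ max 0 (N + 1 - |a - b|) / ((N + 1) * (N + 2)) * x := by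
  by_cases hab : |a - b| < N + 1
  · have : 0 < N + 2 := by linarith
    exact mul_nonneg (by positivity) (hx hab)
  · simp [max_eq_left (by linarith : N + 1 - |a - b| ≤ 0)]

theorem dephasing_preserves_advantage_general (N ν : ℕ)
    (ρ : Matrix (Fin (ν + 1)) (Fin (ν + 1)) ℝ)
    (hnn : ∀ k j : Fin (ν + 1), |(k.1 : ℝ) - (j.1 : ℝ)| < (N : ℝ) + 1 → 0 ≤ ρ k j)
    (lam : ℝ)
    (h0 : 2 / ((N : ℝ) + 2) +
      ∑ k : Fin (ν + 1), ∑ j : Fin (ν + 1), (if k = j then 0 else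
        max 0 ((N : ℝ) + 1 - |(k.1 : ℝ) - (j.1 : ℝ)|) / (((N : ℝ) + 1) * ((N : ℝ) + 2))
          * ρ k j)
      > 2 / ((N : ℝ) + 2)) :
    ∀ t : ℝ, 0 ≤ t →
      2 / ((N : ℝ) + 2) +
        ∑ k : Fin (ν + 1), ∑ j : Fin (ν + 1), (if k = j then 0 else
          max 0 ((N : ℝ) + 1 - |(k.1 : ℝ) - (j.1 : ℝ)|) / (((N : ℝ) + 1) * ((N : ℝ) + 2))
            * (exp (-(t / 2) * lam * ((k.1 : ℝ) - (j.1 : ℝ)) ^ 2) * ρ k j))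
        > 2 / ((N : ℝ) + 2) := by
  intro t _
  rw [gt_iff_lt, lt_add_iff_pos_right] at h0 ⊢
  have hterm : ∀ k j : Fin (ν + 1), 0 ≤ (if k = j then 0 else
      max 0 ((N : ℝ) + 1 - |(k.1 : ℝ) - (j.1 : ℝ)|) / (((N : ℝ) + 1) * ((N : ℝ) + 2))
        * ρ k j) := by
    intro k j
    split_ifs
    · exact le_rfl
    · exact bandWeight_mul_nonneg _ _ _ _ (by positivity) (hnn k j)
  convert Fintype.sum_sum_mul_pos_of_sum_sum_pos
    (fun k j => exp_pos (-(t / 2) * lam * ((k.1 : ℝ) - (j.1 : ℝ)) ^ 2)) hterm h0 using 3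
  split_ifs <;> ring

theorem dephasing_preserves_advantage (N ν : ℕ) (hN : 1 ≤ N) (hν : N ≤ ν)
    (ρ : Matrix (Fin (ν + 1)) (Fin (ν + 1)) ℝ)
    (hsymm : ρ.IsHermitian) (hpsd : ρ.PosSemidef)
    (htr : ρ.trace = 1)
    (hnn : ∀ k j : Fin (ν + 1), |(k.1 : ℝ) - (j.1 : ℝ)| < (N : ℝ) + 1 → 0 ≤ ρ k j)
    (lam : ℝ) (hlam : 0 < lam)
    (h0 : 2 / ((N : ℝ) + 2) +
      ∑ k : Fin (ν + 1), ∑ j : Fin (ν + 1), (if k = j then 0 else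
        max 0 ((N : ℝ) + 1 - |(k.1 : ℝ) - (j.1 : ℝ)|) / (((N : ℝ) + 1) * ((N : ℝ) + 2))
          * ρ k j)
      > 2 / ((N : ℝ) + 2)) :
    ∀ t : ℝ, 0 ≤ t →
      2 / ((N : ℝ) + 2) +
        ∑ k : Fin (ν + 1), ∑ j : Fin (ν + 1), (if k = j then 0 else
          max 0 ((N : ℝ) + 1 - |(k.1 : ℝ) - (j.1 : ℝ)|) / (((N : ℝ) + 1) * ((N : ℝ) + 2))
            * (exp (-(t / 2) * lam * ((k.1 : ℝ) - (j.1 : ℝ)) ^ 2) * ρ k j))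
        > 2 / ((N : ℝ) + 2) :=
  dephasing_preserves_advantage_general N ν ρ hnn lam h0
end

section
/- Suppose for each ν, x^{(1)}(ν) and x^{(2)}(ν) are unit vectors in ℝ^{ν+1} with non-negative entries whose fidelities F_ν(x^{(i)}(ν)) → 1 as ν → ∞, and ⟨x^{(1)}(ν), x^{(2)}(ν)⟩ → 0. Let c₁(ν), c₂(ν) ≥ 0 be such that c₁x^{(1)} + c₂x^{(2)} is a unit vector. Then F_ν(c₁x^{(1)} + c₂x^{(2)}) → 1 as ν → ∞. -/
/-!
The kernel `max 0 (N + 1 - |k - j|)` counts the windows `{m, …, m + N}` containing both `k` and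
`j`, so the quadratic form in `pureFid` is a sum over windows of squared window sums. By
Cauchy–Schwarz on each window, and since every index lies in `N + 1` windows, the form is at most
`(N + 1)²‖x‖²`, i.e. `pureFid ≤ 1` on unit vectors. For non-negative vectors the cross terms of
`c₁x₁ + c₂x₂` are non-negative, and the normalisation `c₁² + c₂² + 2c₁c₂⟨x₁, x₂⟩ = 1` then yields
`pureFid(c₁x₁ + c₂x₂) ≥ pureFid x₁ + pureFid x₂ - 1 - ⟨x₁, x₂⟩`, which tends to `1`.
-/

open Finset Filter Topology

/-- Teleportation fidelity of a pure resource state with real coefficients. -/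
noncomputable def pureFid (N ν : ℕ) (x : Fin (ν + 1) → ℝ) : ℝ :=
  1 / ((N : ℝ) + 2) +
    ∑ k : Fin (ν + 1), ∑ j : Fin (ν + 1),
      max 0 ((N : ℝ) + 1 - |(k.1 : ℝ) - (j.1 : ℝ)|) / (((N : ℝ) + 1) * ((N : ℝ) + 2))
        * x k * x j

lemma sum_mul_add_mul_sq {ι : Type*} [Fintype ι] (c d : ℝ) (u v : ι → ℝ) :
    ∑ k, (c * u k + d * v k) ^ 2 =
      c ^ 2 * ∑ k, u k ^ 2 + 2 * c * d * ∑ k, u k * v k + d ^ 2 * ∑ k, v k ^ 2 := by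
  simp only [mul_sum, ← sum_add_distrib]
  exact sum_congr rfl fun k _ => by ring

section

variable {N ν : ℕ}

def fejerWindow (N ν : ℕ) (m : ℤ) : Finset (Fin (ν + 1)) := {k | m ≤ k ∧ (k : ℤ) ≤ m + N}

lemma card_fejerWindow_le (m : ℤ) : #(fejerWindow N ν m) ≤ N + 1 := by
  calc #(fejerWindow N ν m) ≤ #(Icc m (m + N)) :=
        card_le_card_of_injOn (fun k => ((k : ℕ) : ℤ))
          (fun k hk => by simpa [fejerWindow] using hk)
          (fun a _ b _ hab => Fin.ext (by simpa using hab))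
    _ = N + 1 := by simp only [Int.card_Icc]; omega

lemma card_fejerWindows_containing (k j : Fin (ν + 1)) :
    (#{m ∈ Icc (-(N : ℤ)) ν | k ∈ fejerWindow N ν m ∧ j ∈ fejerWindow N ν m} : ℝ) =
      max 0 ((N : ℝ) + 1 - |(k.1 : ℝ) - (j.1 : ℝ)|) := by
  have hk := k.isLt
  have hj := j.isLt
  have hcount : {m ∈ Icc (-(N : ℤ)) ν | k ∈ fejerWindow N ν m ∧ j ∈ fejerWindow N ν m} =
      Icc (max (k : ℤ) j - N) (min (k : ℤ) j) := by
    ext m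
    simp only [fejerWindow, mem_filter, mem_Icc, mem_univ, true_and, le_min_iff]
    omega
  have hlen : min (k : ℤ) j + 1 - (max (k : ℤ) j - N) = N + 1 - |(k : ℤ) - j| := by
    rw [abs_eq_max_neg]; omega
  rw [hcount, Int.card_Icc, hlen, ← Int.cast_natCast, Int.toNat_eq_max, max_comm]
  push_cast
  rfl

lemma card_fejerWindows_containing_self (k : Fin (ν + 1)) :
    #{m ∈ Icc (-(N : ℤ)) ν | k ∈ fejerWindow N ν m} = N + 1 := by
  have := card_fejerWindows_containing (N := N) k k
  simp only [and_self, sub_self, abs_zero, sub_zero] at this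
  exact_mod_cast this.trans (max_eq_right (by positivity))

lemma sum_fejer_mul_eq_sum_sq (x : Fin (ν + 1) → ℝ) :
    ∑ k, ∑ j, max 0 ((N : ℝ) + 1 - |(k.1 : ℝ) - (j.1 : ℝ)|) * x k * x j =
      ∑ m ∈ Icc (-(N : ℤ)) ν, (∑ k ∈ fejerWindow N ν m, x k) ^ 2 := by
  have hwin : ∀ m, ∑ k ∈ fejerWindow N ν m, x k = ∑ k, if k ∈ fejerWindow N ν m then x k else 0 :=
    fun m => by rw [sum_ite_mem, univ_inter]
  simp_rw [hwin, sq, sum_mul_sum, ← card_fejerWindows_containing, natCast_card_filter, sum_mul,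
    ite_mul, ite_and, one_mul, zero_mul, mul_ite, mul_zero]
  exact (sum_congr rfl fun k _ => sum_comm).trans sum_comm

lemma sum_fejer_mul_le (x : Fin (ν + 1) → ℝ) :
    ∑ k, ∑ j, max 0 ((N : ℝ) + 1 - |(k.1 : ℝ) - (j.1 : ℝ)|) * x k * x j ≤
      ((N : ℝ) + 1) ^ 2 * ∑ k, x k ^ 2 := by
  rw [sum_fejer_mul_eq_sum_sq]
  calc ∑ m ∈ Icc (-(N : ℤ)) ν, (∑ k ∈ fejerWindow N ν m, x k) ^ 2
      ≤ ∑ m ∈ Icc (-(N : ℤ)) ν, ((N : ℝ) + 1) * ∑ k ∈ fejerWindow N ν m, x k ^ 2 := by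
        refine sum_le_sum fun m _ => sq_sum_le_card_mul_sum_sq.trans ?_
        gcongr
        exact_mod_cast card_fejerWindow_le m
    _ = ((N : ℝ) + 1) * ∑ k, (#{m ∈ Icc (-(N : ℤ)) ν | k ∈ fejerWindow N ν m} : ℝ) * x k ^ 2 := by
        simp_rw [← mul_sum, natCast_card_filter, sum_mul, ite_mul, one_mul, zero_mul]
        rw [sum_comm]
        simp_rw [sum_ite_mem, univ_inter]
    _ = ((N : ℝ) + 1) ^ 2 * ∑ k, x k ^ 2 := by
        simp_rw [card_fejerWindows_containing_self, ← mul_sum]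
        push_cast
        ring

lemma pureFid_le_one {x : Fin (ν + 1) → ℝ} (hx : ∑ k, x k ^ 2 = 1) : pureFid N ν x ≤ 1 := by
  calc pureFid N ν x
      = 1 / ((N : ℝ) + 2) + (∑ k, ∑ j, max 0 ((N : ℝ) + 1 - |(k.1 : ℝ) - (j.1 : ℝ)|) * x k * x j)
          / (((N : ℝ) + 1) * ((N : ℝ) + 2)) := by
        simp_rw [pureFid, div_mul_eq_mul_div, ← sum_div]
    _ ≤ 1 / ((N : ℝ) + 2) + ((N : ℝ) + 1) ^ 2 / (((N : ℝ) + 1) * ((N : ℝ) + 2)) := by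
        gcongr
        simpa [hx] using sum_fejer_mul_le x
    _ = 1 := by
        field_simp
        ring

lemma le_pureFid_superposition_sub {u v : Fin (ν + 1) → ℝ} (hu : ∀ k, 0 ≤ u k) (hv : ∀ k, 0 ≤ v k)
    {c d : ℝ} (hc : 0 ≤ c) (hd : 0 ≤ d) :
    c ^ 2 * (pureFid N ν u - 1 / ((N : ℝ) + 2)) + d ^ 2 * (pureFid N ν v - 1 / ((N : ℝ) + 2)) ≤
      pureFid N ν (fun k => c * u k + d * v k) - 1 / ((N : ℝ) + 2) := by
  simp only [pureFid, add_sub_cancel_left, mul_sum, ← sum_add_distrib]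
  refine sum_le_sum fun k _ => sum_le_sum fun j _ => ?_
  have hK : 0 ≤ max 0 ((N : ℝ) + 1 - |(k.1 : ℝ) - (j.1 : ℝ)|) / (((N : ℝ) + 1) * ((N : ℝ) + 2)) :=
    by positivity
  have hcross : 0 ≤ c * d * (u k * v j + v k * u j) :=
    mul_nonneg (mul_nonneg hc hd) (add_nonneg (mul_nonneg (hu k) (hv j)) (mul_nonneg (hv k) (hu j)))
  nlinarith [mul_nonneg hK hcross]

lemma le_pureFid_superposition {u v : Fin (ν + 1) → ℝ} (hu : ∀ k, 0 ≤ u k) (hv : ∀ k, 0 ≤ v k)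
    (hu₁ : ∑ k, u k ^ 2 = 1) (hv₁ : ∑ k, v k ^ 2 = 1) {c d : ℝ} (hc : 0 ≤ c) (hd : 0 ≤ d)
    (hcd : ∑ k, (c * u k + d * v k) ^ 2 = 1) :
    pureFid N ν u + pureFid N ν v - 1 - ∑ k, u k * v k ≤
      pureFid N ν (fun k => c * u k + d * v k) := by
  have hnorm : c ^ 2 + d ^ 2 + 2 * c * d * ∑ k, u k * v k = 1 := by
    rw [← hcd, sum_mul_add_mul_sq, hu₁, hv₁]; ring
  have ht : 0 ≤ ∑ k, u k * v k := sum_nonneg fun k _ => mul_nonneg (hu k) (hv k)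
  have hcd₀ : 0 ≤ c * d := mul_nonneg hc hd
  have hc₁ : c ^ 2 ≤ 1 := by nlinarith [mul_nonneg hcd₀ ht]
  have hd₁ : d ^ 2 ≤ 1 := by nlinarith [mul_nonneg hcd₀ ht]
  have hcd₁ : 2 * c * d ≤ 1 := by nlinarith [sq_nonneg (c - d), mul_nonneg hcd₀ ht]
  have he : 0 ≤ 1 / ((N : ℝ) + 2) := by positivity
  have hw := le_pureFid_superposition_sub (N := N) hu hv hc hd
  have hFu := pureFid_le_one (N := N) hu₁
  have hFv := pureFid_le_one (N := N) hv₁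
  nlinarith [mul_nonneg (sub_nonneg.2 hc₁) (sub_nonneg.2 hFu),
    mul_nonneg (sub_nonneg.2 hd₁) (sub_nonneg.2 hFv), mul_nonneg ht (sub_nonneg.2 hcd₁),
    mul_nonneg (mul_nonneg hcd₀ ht) he]

end

theorem superposition_asymptotically_perfect_general (N : ℕ)
    (x₁ x₂ : (ν : ℕ) → Fin (ν + 1) → ℝ)
    (hx₁ : ∀ ν k, 0 ≤ x₁ ν k) (hx₂ : ∀ ν k, 0 ≤ x₂ ν k)
    (hn₁ : ∀ ν, ∑ k, (x₁ ν k) ^ 2 = 1) (hn₂ : ∀ ν, ∑ k, (x₂ ν k) ^ 2 = 1)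
    (hf₁ : Tendsto (fun ν => pureFid N ν (x₁ ν)) atTop (𝓝 1))
    (hf₂ : Tendsto (fun ν => pureFid N ν (x₂ ν)) atTop (𝓝 1))
    (horth : Tendsto (fun ν => ∑ k, x₁ ν k * x₂ ν k) atTop (𝓝 0))
    (c₁ c₂ : ℕ → ℝ) (hc₁ : ∀ ν, 0 ≤ c₁ ν) (hc₂ : ∀ ν, 0 ≤ c₂ ν)
    (hnc : ∀ ν, ∑ k, (c₁ ν * x₁ ν k + c₂ ν * x₂ ν k) ^ 2 = 1) :
    Tendsto (fun ν => pureFid N ν (fun k => c₁ ν * x₁ ν k + c₂ ν * x₂ ν k))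
      atTop (𝓝 1) := by
  have hlower : Tendsto (fun ν => pureFid N ν (x₁ ν) + pureFid N ν (x₂ ν) - 1 -
      ∑ k, x₁ ν k * x₂ ν k) atTop (𝓝 1) := by
    simpa using ((hf₁.add hf₂).sub_const 1).sub horth
  exact tendsto_of_tendsto_of_tendsto_of_le_of_le hlower tendsto_const_nhds
    (fun ν => le_pureFid_superposition (hx₁ ν) (hx₂ ν) (hn₁ ν) (hn₂ ν) (hc₁ ν) (hc₂ ν)
      (hnc ν))
    (fun ν => pureFid_le_one (hnc ν))

theorem superposition_asymptotically_perfect (N : ℕ) (hN : 1 ≤ N)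
    (x₁ x₂ : (ν : ℕ) → Fin (ν + 1) → ℝ)
    (hx₁ : ∀ ν k, 0 ≤ x₁ ν k) (hx₂ : ∀ ν k, 0 ≤ x₂ ν k)
    (hn₁ : ∀ ν, ∑ k, (x₁ ν k) ^ 2 = 1) (hn₂ : ∀ ν, ∑ k, (x₂ ν k) ^ 2 = 1)
    (hf₁ : Tendsto (fun ν => pureFid N ν (x₁ ν)) atTop (𝓝 1))
    (hf₂ : Tendsto (fun ν => pureFid N ν (x₂ ν)) atTop (𝓝 1))
    (horth : Tendsto (fun ν => ∑ k, x₁ ν k * x₂ ν k) atTop (𝓝 0))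
    (c₁ c₂ : ℕ → ℝ) (hc₁ : ∀ ν, 0 ≤ c₁ ν) (hc₂ : ∀ ν, 0 ≤ c₂ ν)
    (hnc : ∀ ν, ∑ k, (c₁ ν * x₁ ν k + c₂ ν * x₂ ν k) ^ 2 = 1) :
    Tendsto (fun ν => pureFid N ν (fun k => c₁ ν * x₁ ν k + c₂ ν * x₂ ν k))
      atTop (𝓝 1) :=
  superposition_asymptotically_perfect_general N x₁ x₂ hx₁ hx₂ hn₁ hn₂ hf₁ hf₂ horth c₁ c₂ hc₁ hc₂
    hnc
end

section
/- For any unit vector x ∈ ℝ^{ν+1} (ν ≥ N), the fidelity F(x) = 1/(N+2) + Σ_{k,j=0}^{ν} max{0,N+1-|k-j|}/((N+1)(N+2)) x_k x_j satisfies F(x) ≤ 1. -/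
/-!
The Toeplitz matrix `T k j = max 0 (N + 1 - |k - j|)` factors as `Bᵀ B` with
`B m k = 1` if `k ≤ m ≤ k + N` and `0` otherwise: the windows of `k` and `j` overlap in exactly
`N + 1 - |k - j|` points. Every row and every column of `B` has at most `N + 1` ones, so by the
Schur test `xᵀ T x = ‖B x‖² ≤ (N + 1)² ‖x‖²`, and `1 / (N + 2) + (N + 1)² / ((N + 1) (N + 2)) = 1`.
-/

open Finset

theorem schur_test {ι κ : Type*} (s : Finset ι) (t : Finset κ) (B : ι → κ → ℝ) (x : κ → ℝ)
    {r c : ℝ} (hB : ∀ i ∈ s, ∀ j ∈ t, 0 ≤ B i j) (hr₀ : 0 ≤ r)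
    (hr : ∀ i ∈ s, ∑ j ∈ t, B i j ≤ r) (hc : ∀ j ∈ t, ∑ i ∈ s, B i j ≤ c) :
    ∑ i ∈ s, (∑ j ∈ t, B i j * x j) ^ 2 ≤ r * c * ∑ j ∈ t, x j ^ 2 := by
  have hrow : ∀ i ∈ s, (∑ j ∈ t, B i j * x j) ^ 2 ≤ r * ∑ j ∈ t, B i j * x j ^ 2 := by
    intro i hi
    calc (∑ j ∈ t, B i j * x j) ^ 2 ≤ (∑ j ∈ t, B i j) * ∑ j ∈ t, B i j * x j ^ 2 :=
          sum_sq_le_sum_mul_sum_of_sq_le_mul t (hB i hi)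
            (fun j hj => mul_nonneg (hB i hi j hj) (sq_nonneg _)) (fun j _ => le_of_eq (by ring))
      _ ≤ r * ∑ j ∈ t, B i j * x j ^ 2 :=
          mul_le_mul_of_nonneg_right (hr i hi)
            (sum_nonneg fun j hj => mul_nonneg (hB i hi j hj) (sq_nonneg _))
  calc ∑ i ∈ s, (∑ j ∈ t, B i j * x j) ^ 2 ≤ ∑ i ∈ s, r * ∑ j ∈ t, B i j * x j ^ 2 :=
        sum_le_sum hrow
    _ = r * ∑ j ∈ t, (∑ i ∈ s, B i j) * x j ^ 2 := by
        rw [← mul_sum, sum_comm]; simp only [sum_mul]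
    _ ≤ r * ∑ j ∈ t, c * x j ^ 2 := by
        gcongr with j hj
        exact hc j hj
    _ = r * c * ∑ j ∈ t, x j ^ 2 := by rw [← mul_sum, mul_assoc]

theorem sum_sum_mul_mul_eq_sum_sq_of_gram {ι κ : Type*} (s : Finset ι) (t : Finset κ)
    (A : κ → κ → ℝ) (B : ι → κ → ℝ) (x : κ → ℝ)
    (hA : ∀ k ∈ t, ∀ j ∈ t, A k j = ∑ i ∈ s, B i k * B i j) :
    ∑ k ∈ t, ∑ j ∈ t, A k j * x k * x j = ∑ i ∈ s, (∑ k ∈ t, B i k * x k) ^ 2 := by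
  calc ∑ k ∈ t, ∑ j ∈ t, A k j * x k * x j
        = ∑ k ∈ t, ∑ j ∈ t, ∑ i ∈ s, B i k * x k * (B i j * x j) :=
          sum_congr rfl fun k hk => sum_congr rfl fun j hj => by
            rw [hA k hk j hj, sum_mul, sum_mul]
            exact sum_congr rfl fun i _ => by ring
    _ = ∑ k ∈ t, ∑ i ∈ s, ∑ j ∈ t, B i k * x k * (B i j * x j) :=
        sum_congr rfl fun k _ => sum_comm
    _ = ∑ i ∈ s, ∑ k ∈ t, ∑ j ∈ t, B i k * x k * (B i j * x j) := sum_comm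
    _ = ∑ i ∈ s, (∑ k ∈ t, B i k * x k) ^ 2 := by simp_rw [sq, sum_mul_sum]

/-- `band N a m` is the entry `B m a` of the 0/1 matrix with `Bᵀ B = (max 0 (N + 1 - |a - b|))`. -/
def band (N a m : ℕ) : ℝ := if a ≤ m ∧ m ≤ a + N then 1 else 0

theorem band_nonneg (N a m : ℕ) : 0 ≤ band N a m := by
  unfold band; split_ifs <;> norm_num

theorem sum_boole_le_card_of_imp_mem {ι : Type*} {s I : Finset ι} {p : ι → Prop}
    [DecidablePred p] (hp : ∀ a, p a → a ∈ I) :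
    ∑ a ∈ s, (if p a then (1 : ℝ) else 0) ≤ I.card := by
  rw [sum_boole]
  exact_mod_cast card_le_card fun a ha => hp a (mem_filter.1 ha).2

theorem sum_band_left_le (N : ℕ) (s : Finset ℕ) (m : ℕ) : ∑ a ∈ s, band N a m ≤ N + 1 :=
  (sum_boole_le_card_of_imp_mem (I := Icc (m - N) m) fun a ha => by
    simp only [mem_Icc]; omega).trans (by rw [Nat.card_Icc]; exact_mod_cast (by omega))

theorem sum_band_right_le (N : ℕ) (s : Finset ℕ) (a : ℕ) : ∑ m ∈ s, band N a m ≤ N + 1 :=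
  (sum_boole_le_card_of_imp_mem (I := Icc a (a + N)) fun m hm => by
    simp only [mem_Icc]; omega).trans (by rw [Nat.card_Icc]; exact_mod_cast (by omega))

theorem natCast_add_one_sub_eq_max (p q : ℕ) :
    ((q + 1 - p : ℕ) : ℝ) = max 0 ((q : ℝ) + 1 - p) := by
  rcases le_or_gt p (q + 1) with h | h
  · have h' : (p : ℝ) ≤ q + 1 := by exact_mod_cast h
    rw [Nat.cast_sub h, max_eq_right (by linarith)]
    push_cast; ring
  · have h' : (q : ℝ) + 1 < p := by exact_mod_cast h
    rw [Nat.sub_eq_zero_of_le h.le, max_eq_left (by linarith), Nat.cast_zero]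

theorem sum_band_mul_band {N L a b : ℕ} (ha : a + N < L) (hb : b + N < L) :
    ∑ m ∈ range L, band N a m * band N b m = max 0 ((N : ℝ) + 1 - |(a : ℝ) - b|) := by
  simp only [band, ite_zero_mul_ite_zero, one_mul]
  have hfilter : (range L).filter (fun m => (a ≤ m ∧ m ≤ a + N) ∧ b ≤ m ∧ m ≤ b + N)
      = Icc (max a b) (min a b + N) := by
    ext m
    simp only [mem_filter, mem_range, mem_Icc, max_le_iff]
    omega
  rw [sum_boole, hfilter, Nat.card_Icc, natCast_add_one_sub_eq_max]
  rcases le_total a b with h | h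
  · rw [max_eq_right h, min_eq_left h, abs_sub_comm, abs_of_nonneg (by simpa using h)]
    push_cast; ring_nf
  · rw [max_eq_left h, min_eq_right h, abs_of_nonneg (by simpa using h)]
    push_cast; ring_nf

theorem pure_fidelity_le_one_general (N ν : ℕ)
    (x : Fin (ν + 1) → ℝ) (hx : ∑ k, (x k) ^ 2 = 1) :
    1 / ((N : ℝ) + 2) +
      ∑ k : Fin (ν + 1), ∑ j : Fin (ν + 1),
        max 0 ((N : ℝ) + 1 - |(k.1 : ℝ) - (j.1 : ℝ)|) / (((N : ℝ) + 1) * ((N : ℝ) + 2))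
          * x k * x j
      ≤ 1 := by
  set T : Fin (ν + 1) → Fin (ν + 1) → ℝ :=
    fun k j => max 0 ((N : ℝ) + 1 - |(k.1 : ℝ) - (j.1 : ℝ)|)
  have hgram : ∀ k ∈ univ, ∀ j ∈ univ,
      T k j = ∑ m ∈ range (ν + N + 1), band N k m * band N j m := fun k _ j _ =>
    (sum_band_mul_band (by omega) (by omega)).symm
  have hquad : ∑ k, ∑ j, T k j * x k * x j ≤ ((N : ℝ) + 1) ^ 2 := by
    rw [sum_sum_mul_mul_eq_sum_sq_of_gram _ _ T (fun m k => band N k m) x hgram]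
    calc _ ≤ ((N : ℝ) + 1) * ((N : ℝ) + 1) * ∑ k, x k ^ 2 :=
          schur_test _ _ _ x (fun _ _ _ _ => band_nonneg _ _ _) (by positivity)
            (fun m _ => (Fin.sum_univ_eq_sum_range (band N · m) _).trans_le
              (sum_band_left_le N _ m))
            (fun k _ => sum_band_right_le N _ k)
      _ = ((N : ℝ) + 1) ^ 2 := by rw [hx]; ring
  calc _ = 1 / ((N : ℝ) + 2) +
        (∑ k, ∑ j, T k j * x k * x j) / (((N : ℝ) + 1) * ((N : ℝ) + 2)) := by
        simp only [sum_div]; congr! 3; ring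
    _ ≤ 1 / ((N : ℝ) + 2) + ((N : ℝ) + 1) ^ 2 / (((N : ℝ) + 1) * ((N : ℝ) + 2)) := by gcongr
    _ = 1 := by field_simp; ring

theorem pure_fidelity_le_one (N ν : ℕ) (hN : 1 ≤ N) (hν : N ≤ ν)
    (x : Fin (ν + 1) → ℝ) (hx : ∑ k, (x k) ^ 2 = 1) :
    1 / ((N : ℝ) + 2) +
      ∑ k : Fin (ν + 1), ∑ j : Fin (ν + 1),
        max 0 ((N : ℝ) + 1 - |(k.1 : ℝ) - (j.1 : ℝ)|) / (((N : ℝ) + 1) * ((N : ℝ) + 2))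
          * x k * x j
      ≤ 1 :=
  pure_fidelity_le_one_general N ν x hx
end

section
/- Under the loss master equation with diagonal Lindblad rates, the fidelity of the evolved resource state satisfies f(t) ≥ e^{-2t·max_k η_k} f(0), where η_k ≥ 0 are the decay rates and ρ_{k,j}(t) includes the term e^{-t(η_k+η_j)}ρ_{k,j}(0) plus lower-particle-number components that do not contribute to the fidelity. Consequently, if 2t·max_k η_k < ln(f(0)(N+2)/2), then f(t) > 2/(N+2). -/
/-!
Every coherence `ρ k j` (diagonal or not) decays by the factor `exp (-t (η k + η j))`, which is at
least `exp (-2 t M)`. Since the fidelity is a nonnegative combination of nonnegative entries, and the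
diagonal entries sum to one, it decays at most by that factor. The threshold statement follows by
exponentiating the hypothesis on `2 t M`.
-/

open Finset Real

lemma exp_neg_two_mul_le_exp_neg_mul_add {t a b M : ℝ} (ht : 0 ≤ t) (ha : a ≤ M) (hb : b ≤ M) :
    exp (-2 * t * M) ≤ exp (-t * (a + b)) :=
  exp_le_exp.2 (by nlinarith)

lemma mul_sum_le_sum_mul_of_le {ι : Type*} (s : Finset ι) {c : ℝ} {x d : ι → ℝ}
    (hx : ∀ i ∈ s, 0 ≤ x i) (hd : ∀ i ∈ s, c ≤ d i) :
    c * ∑ i ∈ s, x i ≤ ∑ i ∈ s, d i * x i := by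
  rw [mul_sum]
  exact sum_le_sum fun i hi => mul_le_mul_of_nonneg_right (hd i hi) (hx i hi)

section OffDiagonal

variable {ι : Type*} [Fintype ι] [DecidableEq ι] {w ρ d : ι → ι → ℝ}

lemma offDiag_sum_nonneg (hw : ∀ k j, 0 ≤ w k j) (hρ : ∀ k j, 0 ≤ ρ k j) :
    0 ≤ ∑ k, ∑ j, (if k = j then 0 else w k j * ρ k j) :=
  sum_nonneg fun k _ => sum_nonneg fun j _ => by
    split_ifs
    exacts [le_rfl, mul_nonneg (hw k j) (hρ k j)]

lemma mul_offDiag_sum_le {c : ℝ} (hw : ∀ k j, 0 ≤ w k j) (hρ : ∀ k j, 0 ≤ ρ k j)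
    (hd : ∀ k j, c ≤ d k j) :
    c * ∑ k, ∑ j, (if k = j then 0 else w k j * ρ k j) ≤
      ∑ k, ∑ j, (if k = j then 0 else w k j * (d k j * ρ k j)) := by
  rw [mul_sum]
  refine sum_le_sum fun k _ => ?_
  rw [mul_sum]
  refine sum_le_sum fun j _ => ?_
  split_ifs
  · simp
  · rw [mul_left_comm]
    exact mul_le_mul_of_nonneg_left (mul_le_mul_of_nonneg_right (hd k j) (hρ k j)) (hw k j)

end OffDiagonal

lemma lt_exp_neg_mul_of_lt_log {c f s : ℝ} (hc : 0 < c) (hf : 0 < f) (h : s < log (f / c)) :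
    c < exp (-s) * f := by
  have hs : exp s * c < f := (lt_div_iff₀ hc).1 ((lt_log_iff_exp_lt (div_pos hf hc)).1 h)
  rw [exp_neg, ← div_eq_inv_mul, lt_div_iff₀ (exp_pos s)]
  linarith

theorem particle_loss_fidelity_bound_general (N ν : ℕ)
    (ρ : Matrix (Fin (ν + 1)) (Fin (ν + 1)) ℝ)
    (hnn : ∀ k j, 0 ≤ ρ k j) (htr : ∑ k, ρ k k = 1)
    (η : Fin (ν + 1) → ℝ) (t : ℝ) (ht : 0 ≤ t)
    (f0 ft M : ℝ)
    (hM : M = Finset.univ.sup' Finset.univ_nonempty η)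
    (hf0 : f0 = 2 / ((N : ℝ) + 2) +
      ∑ k : Fin (ν + 1), ∑ j : Fin (ν + 1), (if k = j then 0 else
        max 0 ((N : ℝ) + 1 - |(k.1 : ℝ) - (j.1 : ℝ)|) / (((N : ℝ) + 1) * ((N : ℝ) + 2))
          * ρ k j))
    (hft : ft = (2 / ((N : ℝ) + 2)) * (∑ k : Fin (ν + 1), exp (-2 * t * η k) * ρ k k) +
      ∑ k : Fin (ν + 1), ∑ j : Fin (ν + 1), (if k = j then 0 else
        max 0 ((N : ℝ) + 1 - |(k.1 : ℝ) - (j.1 : ℝ)|) / (((N : ℝ) + 1) * ((N : ℝ) + 2))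
          * (exp (-t * (η k + η j)) * ρ k j))) :
    ft ≥ exp (-2 * t * M) * f0 ∧
    (2 * t * M < Real.log (f0 * ((N : ℝ) + 2) / 2) → ft > 2 / ((N : ℝ) + 2)) := by
  have hηM : ∀ k, η k ≤ M := fun k => hM ▸ le_sup' η (mem_univ k)
  have hdecay : ∀ k j, exp (-2 * t * M) ≤ exp (-t * (η k + η j)) := fun k j =>
    exp_neg_two_mul_le_exp_neg_mul_add ht (hηM k) (hηM j)
  have hdiag : exp (-2 * t * M) ≤ ∑ k, exp (-2 * t * η k) * ρ k k := by
    calc exp (-2 * t * M) = exp (-2 * t * M) * ∑ k, ρ k k := by rw [htr, mul_one]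
      _ ≤ _ := mul_sum_le_sum_mul_of_le _ (fun k _ => hnn k k) fun k _ =>
        (hdecay k k).trans_eq (by ring_nf)
  have hbound : ft ≥ exp (-2 * t * M) * f0 := by
    rw [hft, hf0, mul_add (exp (-2 * t * M)), mul_comm (exp (-2 * t * M)) (2 / _)]
    exact add_le_add (mul_le_mul_of_nonneg_left hdiag (by positivity))
      (mul_offDiag_sum_le (fun _ _ => by positivity) hnn hdecay)
  refine ⟨hbound, fun hlog => hbound.trans_lt' ?_⟩
  have hf0pos : 0 < f0 := by
    rw [hf0]
    exact add_pos_of_pos_of_nonneg (by positivity) (offDiag_sum_nonneg (fun _ _ => by positivity) hnn)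
  rw [← div_div_eq_mul_div] at hlog
  simpa [neg_mul] using lt_exp_neg_mul_of_lt_log (by positivity) hf0pos hlog

theorem particle_loss_fidelity_bound (N ν : ℕ) (hN : 1 ≤ N) (hν : N ≤ ν)
    (ρ : Matrix (Fin (ν + 1)) (Fin (ν + 1)) ℝ)
    (hnn : ∀ k j, 0 ≤ ρ k j) (htr : ∑ k, ρ k k = 1)
    (η : Fin (ν + 1) → ℝ) (hη : ∀ k, 0 ≤ η k) (t : ℝ) (ht : 0 ≤ t)
    (f0 ft M : ℝ)
    (hM : M = Finset.univ.sup' Finset.univ_nonempty η)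
    (hf0 : f0 = 2 / ((N : ℝ) + 2) +
      ∑ k : Fin (ν + 1), ∑ j : Fin (ν + 1), (if k = j then 0 else
        max 0 ((N : ℝ) + 1 - |(k.1 : ℝ) - (j.1 : ℝ)|) / (((N : ℝ) + 1) * ((N : ℝ) + 2))
          * ρ k j))
    (hft : ft = (2 / ((N : ℝ) + 2)) * (∑ k : Fin (ν + 1), exp (-2 * t * η k) * ρ k k) +
      ∑ k : Fin (ν + 1), ∑ j : Fin (ν + 1), (if k = j then 0 else
        max 0 ((N : ℝ) + 1 - |(k.1 : ℝ) - (j.1 : ℝ)|) / (((N : ℝ) + 1) * ((N : ℝ) + 2))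
          * (exp (-t * (η k + η j)) * ρ k j))) :
    ft ≥ exp (-2 * t * M) * f0 ∧
    (2 * t * M < Real.log (f0 * ((N : ℝ) + 2) / 2) → ft > 2 / ((N : ℝ) + 2)) :=
  particle_loss_fidelity_bound_general N ν ρ hnn htr η t ht f0 ft M hM hf0 hft
end
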